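/- Assume (A2) and that g₁,…,g₅ ∈ Γ (gₗ(p,q,r,j) = Sˡ_{p,q,r}^j). Then (C1)–(C4) hold: each of the functions (p,q,r,j) ↦ ω¹_{p,q,r}^j, ω²_{q,p,r}^j, ω³_{p,q,r}^j, ω⁴_{p,r,q}^j belongs to iΓ. -/
import Mathlib


open Complex

/-- `f` belongs to `Γ = Γ₁ ∩ Γ₂`. -/
def inGamma (n : ℕ) (f : Fin n → Fin n → Fin n → Fin n → ℂ) : Prop :=
  (∀ p q r j, f p q r j = f r q p j) ∧
  (∀ p q r j, f p q r j = (starRingEnd ℂ) (f j r q p))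

/-- `f ∈ iΓ`. -/
def inIGamma (n : ℕ) (f : Fin n → Fin n → Fin n → Fin n → ℂ) : Prop :=
  ∃ g, inGamma n g ∧ f = fun p q r j => Complex.I * g p q r j

lemma inGamma_add {n : ℕ} {f g : Fin n → Fin n → Fin n → Fin n → ℂ}
    (hf : inGamma n f) (hg : inGamma n g) :
    inGamma n (fun p q r j => f p q r j + g p q r j) := by
  constructor <;> intro p q r j
  · simp only [hf.1 p q r j, hg.1 p q r j]
  · simp only [hf.2 p q r j, hg.2 p q r j, map_add]

lemma inGamma_smul {n : ℕ} {f : Fin n → Fin n → Fin n → Fin n → ℂ}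
    (c : ℝ) (hf : inGamma n f) :
    inGamma n (fun p q r j => (c : ℂ) * f p q r j) := by
  constructor <;> intro p q r j
  · simp only [hf.1 p q r j]
  · simp only [hf.2 p q r j, map_mul, Complex.conj_ofReal]

lemma inIGamma_of {n : ℕ} {h : Fin n → Fin n → Fin n → Fin n → ℂ}
    (H : inGamma n (fun p q r j => Complex.I * h p q r j)) : inIGamma n h := by
  refine ⟨fun p q r j => ((-1 : ℝ) : ℂ) * (Complex.I * h p q r j),
    inGamma_smul (-1) H, ?_⟩
  funext p q r j
  push_cast
  ring_nf
  simp [Complex.I_sq]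

/-- under (A2), if `g₁,…,g₅ ∈ Γ` (with `gₗ = Sˡ` from the
S-formulas), then (C1)–(C4) hold. -/
theorem C_of_G (n : ℕ)
    (ω1 ω2 ω3 ω4 : Fin n → Fin n → Fin n → Fin n → ℂ)
    (hA2 : ∀ p q r j, ω4 p q r j = ω4 q p r j)
    (hg1 : inGamma n (fun p q r j => Complex.I * ω2 q p r j))
    (hg2 : inGamma n (fun p q r j =>
      -(Complex.I / 2) * (ω1 r q p j - ω2 q r p j)))
    (hg3 : inGamma n (fun p q r j =>
      -2 * (-(Complex.I / 2) * (ω1 r q p j - ω2 q r p j))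
        - (Complex.I / 2) *
          (2 * ω1 r q p j + ω3 r q p j + ω4 r p q j + ω4 p r q j)))
    (hg4 : inGamma n (fun p q r j =>
      -(Complex.I / 2) * (-ω3 r q p j + ω4 r p q j + ω4 p r q j)))
    (hg5 : inGamma n (fun p q r j =>
      (Complex.I / 2) * (ω2 q p r j + ω2 q r p j + ω3 p q r j))) :
    inIGamma n (fun p q r j => ω1 p q r j) ∧
    inIGamma n (fun p q r j => ω2 q p r j) ∧
    inIGamma n (fun p q r j => ω3 p q r j) ∧
    inIGamma n (fun p q r j => ω4 p r q j) := by
  -- ω2 symmetry from Γ₁ of g₁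
  have s1 : ∀ p q r j, ω2 q p r j = ω2 q r p j := by
    intro p q r j
    exact mul_left_cancel₀ Complex.I_ne_zero (hg1.1 p q r j)
  -- I * ω1 r q p ∈ Γ
  have hF : inGamma n (fun p q r j => Complex.I * ω1 r q p j) := by
    have h := inGamma_add (inGamma_smul (-2) hg2) hg1
    have e : (fun p q r j => Complex.I * ω1 r q p j)
        = fun p q r j => ((-2 : ℝ) : ℂ) *
            (-(Complex.I / 2) * (ω1 r q p j - ω2 q r p j))
          + Complex.I * ω2 q p r j := by
      funext p q r j
      rw [s1 p q r j]
      push_cast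
      ring
    rw [e]; exact h
  have s2 : ∀ p q r j, ω1 r q p j = ω1 p q r j := by
    intro p q r j
    exact mul_left_cancel₀ Complex.I_ne_zero (hF.1 p q r j)
  have hC1 : inGamma n (fun p q r j => Complex.I * ω1 p q r j) := by
    have e : (fun p q r j => Complex.I * ω1 p q r j)
        = fun p q r j => Complex.I * ω1 r q p j := by
      funext p q r j; rw [s2 p q r j]
    rw [e]; exact hF
  -- I * ω3 ∈ Γ
  have hF3 : inGamma n (fun p q r j => Complex.I * ω3 p q r j) := by
    have h := inGamma_add (inGamma_smul 2 hg5) (inGamma_smul (-2) hg1)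
    have e : (fun p q r j => Complex.I * ω3 p q r j)
        = fun p q r j => ((2 : ℝ) : ℂ) *
            ((Complex.I / 2) * (ω2 q p r j + ω2 q r p j + ω3 p q r j))
          + ((-2 : ℝ) : ℂ) * (Complex.I * ω2 q p r j) := by
      funext p q r j
      rw [s1 p q r j]
      push_cast
      ring
    rw [e]; exact h
  have s3 : ∀ p q r j, ω3 p q r j = ω3 r q p j := by
    intro p q r j
    exact mul_left_cancel₀ Complex.I_ne_zero (hF3.1 p q r j)
  -- I * ω4 p r q ∈ Γ
  have hF4 : inGamma n (fun p q r j => Complex.I * ω4 p r q j) := by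
    have h := inGamma_add (inGamma_smul (-1) hg4) (inGamma_smul (1/2) hF3)
    have e : (fun p q r j => Complex.I * ω4 p r q j)
        = fun p q r j => ((-1 : ℝ) : ℂ) *
            (-(Complex.I / 2) * (-ω3 r q p j + ω4 r p q j + ω4 p r q j))
          + (((1 : ℝ)/2 : ℝ) : ℂ) * (Complex.I * ω3 p q r j) := by
      funext p q r j
      rw [hA2 r p q j, s3 p q r j]
      push_cast
      ring
    rw [e]; exact h
  exact ⟨inIGamma_of hC1, inIGamma_of hg1, inIGamma_of hF3, inIGamma_of hF4⟩
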